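/- arXiv:0810.4569 — 5 statements merged into one kernel-verified Lean document; each statement's English description precedes it below -/
import Mathlib

section
/- Let A be a finite-dimensional ℚ-algebra and let Γ₁ and Γ₂ be two ℤ-orders in A. Then the unit group Γ₁ˣ contains a subgroup isomorphic to ℤ × ℤ if and only if Γ₂ˣ contains a subgroup isomorphic to ℤ × ℤ. (Hence the hyperbolic property can be verified on a single ℤ-order.) -/
/-!
If `Γ₁` is finitely generated and `Γ₂` spans `A`, then `m • Γ₁ ⊆ Γ₂` for some `m ≠ 0`. Two units
`u`, `v` of `Γ₁` that agree modulo the finite-index subgroup `m • Γ₁` satisfy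
`u⁻¹ * v ∈ 1 + m • Γ₁ ⊆ Γ₂` and `v⁻¹ * u ∈ Γ₂`, so `u⁻¹ * v` is a unit of `Γ₁ ⊓ Γ₂`. Hence
`(Γ₁ ⊓ Γ₂)ˣ` has finite index in `Γ₁ˣ`. The intersection of a copy of `ℤ × ℤ` in `Γ₁ˣ` with a
finite-index subgroup contains the image of `n • (ℤ × ℤ) ≅ ℤ × ℤ` for some `n ≠ 0`, and this copy
lies in `(Γ₁ ⊓ Γ₂)ˣ ⊆ Γ₂ˣ`. The converse is symmetric.
-/

/-- A `ℤ`-order in a finite-dimensional `ℚ`-algebra `A`: a subring of `A`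
(hence containing `1`) that is finitely generated as a `ℤ`-module and
spans `A` over `ℚ`. -/
def IsZOrder (A : Type*) [Ring A] [Algebra ℚ A] (Γ : Subring A) : Prop :=
  Γ.toAddSubgroup.FG ∧ Submodule.span ℚ (Γ : Set A) = ⊤

/-- A group `G` contains a subgroup isomorphic to `ℤ × ℤ`, i.e. there is an
injective group homomorphism `Multiplicative (ℤ × ℤ) →* G`. -/
def HasZxZ (G : Type*) [Group G] : Prop :=
  ∃ f : Multiplicative (ℤ × ℤ) →* G, Function.Injective f

open Function

section ClearDenominators

variable {V : Type*} [AddCommGroup V] [Module ℚ V]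

theorem AddSubgroup.exists_nsmul_mem_of_mem_span (Γ : AddSubgroup V) {x : V}
    (hx : x ∈ Submodule.span ℚ (Γ : Set V)) : ∃ k : ℕ, k ≠ 0 ∧ k • x ∈ Γ := by
  induction hx using Submodule.span_induction with
  | mem x hx => exact ⟨1, one_ne_zero, by simpa using hx⟩
  | zero => exact ⟨1, one_ne_zero, by simp⟩
  | add x y _ _ hx hy =>
    obtain ⟨k, hk, hkx⟩ := hx
    obtain ⟨l, hl, hly⟩ := hy
    refine ⟨l * k, mul_ne_zero hl hk, ?_⟩
    rw [smul_add, mul_smul, mul_comm, mul_smul]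
    exact Γ.add_mem (Γ.nsmul_mem hkx l) (Γ.nsmul_mem hly k)
  | smul q x _ hx =>
    obtain ⟨k, hk, hkx⟩ := hx
    refine ⟨q.den * k, mul_ne_zero q.den_ne_zero hk, ?_⟩
    have hq : ((q.den * k : ℕ) : ℚ) * q = ((q.num * k : ℤ) : ℚ) := by
      push_cast
      rw [mul_right_comm, mul_comm (q.den : ℚ), Rat.mul_den_eq_num]
    rw [← Nat.cast_smul_eq_nsmul ℚ, smul_smul, hq, Int.cast_smul_eq_zsmul, mul_smul,
      natCast_zsmul]
    exact Γ.zsmul_mem hkx q.num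

theorem AddSubgroup.exists_nsmul_mem_of_fg_of_span_eq_top {Γ₁ Γ₂ : AddSubgroup V} (h₁ : Γ₁.FG)
    (h₂ : Submodule.span ℚ (Γ₂ : Set V) = ⊤) : ∃ m : ℕ, m ≠ 0 ∧ ∀ x ∈ Γ₁, m • x ∈ Γ₂ := by
  obtain ⟨S, rfl⟩ := h₁
  choose k hk0 hk using fun s : S ↦
    Γ₂.exists_nsmul_mem_of_mem_span (x := s) (h₂ ▸ Submodule.mem_top)
  refine ⟨∏ s, k s, Finset.prod_ne_zero_iff.2 fun s _ ↦ hk0 s, fun x hx ↦ ?_⟩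
  have hle : closure (S : Set V) ≤ Γ₂.comap (nsmulAddMonoidHom (∏ s, k s)) :=
    closure_le _ |>.2 fun s hs ↦ by
      obtain ⟨c, hc⟩ := Finset.dvd_prod_of_mem k (Finset.mem_univ ⟨s, hs⟩)
      rw [SetLike.mem_coe, mem_comap, nsmulAddMonoidHom_apply, hc, mul_comm, mul_smul]
      exact Γ₂.nsmul_mem (hk _) c
  exact hle hx

end ClearDenominators

theorem Subgroup.finiteIndex_of_eq_imp_inv_mul_mem {G X : Type*} [Group G] [Finite X]
    (H : Subgroup G) (c : G → X) (hc : ∀ x y, c x = c y → x⁻¹ * y ∈ H) : H.FiniteIndex := by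
  have : Finite (G ⧸ H) := Finite.of_injective (fun q : G ⧸ H ↦ c q.out) fun p q hpq ↦ by
    simpa using QuotientGroup.eq.2 (hc _ _ hpq)
  exact finiteIndex_of_finite_quotient

section Units

variable {R : Type*} [Ring R]

theorem Subring.mem_range_unitsMap_inclusion {S T : Subring R} (h : S ≤ T) {u : Tˣ}
    (hu : ((u : T) : R) ∈ S) (hu' : (((u⁻¹ : Tˣ) : T) : R) ∈ S) :
    u ∈ (Units.map (Subring.inclusion h).toMonoidHom).range :=
  ⟨⟨⟨_, hu⟩, ⟨_, hu'⟩, by ext; exact (congrArg Subtype.val u.mul_inv :),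
    by ext; exact (congrArg Subtype.val u.inv_mul :)⟩, Units.ext rfl⟩

theorem Subring.finiteIndex_range_unitsMap_inf {Γ₁ Γ₂ : Subring R} (h₁ : Γ₁.toAddSubgroup.FG)
    {m : ℕ} (hm : m ≠ 0) (hmΓ : ∀ x ∈ Γ₁, m • x ∈ Γ₂) :
    (Units.map (inclusion (inf_le_left : Γ₁ ⊓ Γ₂ ≤ Γ₁)).toMonoidHom).range.FiniteIndex := by
  set N := (nsmulAddMonoidHom (α := Γ₁) m).range
  have : AddGroup.FG Γ₁ := (AddGroup.fg_iff_addSubgroup_fg Γ₁.toAddSubgroup).2 h₁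
  have : N.FiniteIndex := AddSubgroup.finiteIndex_range_nsmulAddMonoidHom_of_fg Γ₁ hm
  have inv_mul_mem (u v : Γ₁ˣ) (huv : (u : Γ₁ ⧸ N) = v) : ((u⁻¹ * v : Γ₁ˣ) : R) ∈ Γ₂ := by
    obtain ⟨w, hw⟩ := QuotientAddGroup.eq.1 huv
    have hv : (v : Γ₁) = u + m • w := by
      rw [← nsmulAddMonoidHom_apply, hw, add_neg_cancel_left]
    have : ((u⁻¹ * v : Γ₁ˣ) : Γ₁) = 1 + m • (↑u⁻¹ * w) := by
      rw [Units.val_mul, hv, mul_add, Units.inv_mul, mul_smul_comm]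
    rw [this]
    exact Γ₂.add_mem Γ₂.one_mem (hmΓ _ (↑u⁻¹ * w : Γ₁).2)
  refine Subgroup.finiteIndex_of_eq_imp_inv_mul_mem _ (fun u : Γ₁ˣ ↦ (u : Γ₁ ⧸ N))
    fun u v huv ↦ Subring.mem_range_unitsMap_inclusion _ ⟨Subtype.prop _, inv_mul_mem u v huv⟩
      ⟨Subtype.prop _, ?_⟩
  simpa using inv_mul_mem v u huv.symm

end Units

theorem HasZxZ.of_injective {G H : Type*} [Group G] [Group H] (φ : G →* H) (hφ : Injective φ) :
    HasZxZ G → HasZxZ H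
  | ⟨f, hf⟩ => ⟨φ.comp f, hφ.comp hf⟩

theorem Subgroup.exists_injective_monoidHom_of_finiteIndex {K G : Type*} [CommGroup K]
    [IsMulTorsionFree K] [Group G] {f : K →* G} (hf : Injective f) (H : Subgroup G)
    [H.FiniteIndex] : ∃ g : K →* H, Injective g := by
  have hn : (H.comap f).index ≠ 0 := by
    rw [index_comap]
    exact isFiniteRelIndex_of_finiteIndex.relIndex_ne_zero
  exact ⟨(f.comp (powMonoidHom _)).codRestrict H (H.comap f).pow_index_mem,
    fun x y hxy ↦ pow_left_injective hn (hf (congrArg Subtype.val hxy))⟩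

theorem HasZxZ.subgroup_of_finiteIndex {G : Type*} [Group G] (H : Subgroup G) [H.FiniteIndex] :
    HasZxZ G → HasZxZ H
  | ⟨_, hf⟩ => Subgroup.exists_injective_monoidHom_of_finiteIndex hf H

theorem Subring.hasZxZ_units_of_fg_of_span_eq_top {A : Type*} [Ring A] [Module ℚ A]
    {Γ₁ Γ₂ : Subring A} (h₁ : Γ₁.toAddSubgroup.FG) (h₂ : Submodule.span ℚ (Γ₂ : Set A) = ⊤)
    (h : HasZxZ Γ₁ˣ) : HasZxZ Γ₂ˣ := by
  obtain ⟨m, hm, hmΓ⟩ :=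
    AddSubgroup.exists_nsmul_mem_of_fg_of_span_eq_top (Γ₂ := Γ₂.toAddSubgroup) h₁ h₂
  have := Subring.finiteIndex_range_unitsMap_inf h₁ hm hmΓ
  have hι := Units.map_injective (Subring.inclusion_injective (inf_le_left : Γ₁ ⊓ Γ₂ ≤ Γ₁))
  have hinf : HasZxZ (Γ₁ ⊓ Γ₂ : Subring A)ˣ :=
    (h.subgroup_of_finiteIndex _).of_injective (MonoidHom.ofInjective hι).symm.toMonoidHom
      (MonoidHom.ofInjective hι).symm.injective
  exact hinf.of_injective _ (Units.map_injective (Subring.inclusion_injective inf_le_right))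

theorem order_independence_of_ZxZ_general (A : Type*) [Ring A] [Algebra ℚ A]
    (Γ₁ Γ₂ : Subring A)
    (h₁ : IsZOrder A Γ₁) (h₂ : IsZOrder A Γ₂) :
    HasZxZ Γ₁ˣ ↔ HasZxZ Γ₂ˣ :=
  ⟨Subring.hasZxZ_units_of_fg_of_span_eq_top h₁.1 h₂.2,
    Subring.hasZxZ_units_of_fg_of_span_eq_top h₂.1 h₁.2⟩

theorem order_independence_of_ZxZ (A : Type*) [Ring A] [Algebra ℚ A]
    [FiniteDimensional ℚ A] (Γ₁ Γ₂ : Subring A)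
    (h₁ : IsZOrder A Γ₁) (h₂ : IsZOrder A Γ₂) :
    HasZxZ Γ₁ˣ ↔ HasZxZ Γ₂ˣ :=
  order_independence_of_ZxZ_general A Γ₁ Γ₂ h₁ h₂
end

section
/- Let A be a finite-dimensional ℚ-algebra with the hyperbolic property. Then the Jacobson radical J(A) has ℚ-dimension at most 1. -/
/-- The hyperbolic property: no `ℤ`-order of `A` has a unit group containing `ℤ × ℤ`. -/
def HasHyperbolicProperty (A : Type*) [Ring A] [Algebra ℚ A] : Prop :=
  ∀ Γ : Subring A, IsZOrder A Γ → ¬ HasZxZ Γˣ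

/-!
The Jacobson radical `J` of `A` is nilpotent. If `dim J ≥ 2`, pick `t ≠ 0` in the last nonzero
power of `J`, so that `t J = J t = 0`, and `s ∈ J^m \ ℚ t` with `m` maximal such that
`J^m ⊄ ℚ t`, so that `s² ∈ J^(m+1) ⊆ ℚ t`. Then `1 + s` and `1 + t` commute and
`(1 + s)^a (1 + t)^b = 1 + a s + λ t` for some `λ`, so `(a, b) ↦ (1 + s)^a (1 + t)^b` is
injective. Every finite-dimensional `ℚ`-algebra has a `ℤ`-order (the left order of a full
lattice containing `1`), and integer multiples of `s` and `t` lie in it, which yields `ℤ × ℤ`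
inside its unit group.
-/

open Submodule Module

section Powers

variable {K A : Type*} [Field K] [Ring A] [Algebra K A]

theorem isNilpotent_restrictScalars_jacobson_bot [FiniteDimensional K A] :
    IsNilpotent ((⊥ : Ideal A).jacobson.restrictScalars K) := by
  have := IsArtinianRing.of_finite K A
  obtain ⟨n, hn⟩ := IsArtinianRing.isNilpotent_jacobson_bot (R := A)
  refine ⟨n + 1, ?_⟩
  rw [← restrictScalars_pow n.add_one_ne_zero, Submodule.pow_succ, hn, zero_eq_bot, bot_mul]
  rfl

theorem restrictScalars_jacobson_bot_mul_le :
    (⊥ : Ideal A).jacobson.restrictScalars K * (⊥ : Ideal A).jacobson.restrictScalars K ≤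
      (⊥ : Ideal A).jacobson.restrictScalars K :=
  mul_le.2 fun x _ _ hy => Ideal.mul_mem_left _ x hy

variable {W : Submodule K A}

theorem pow_succ_le_self (hW : W * W ≤ W) (n : ℕ) : W ^ (n + 1) ≤ W := by
  induction n with
  | zero => rw [pow_one]
  | succ n ih => exact (pow_succ W (n + 1) ▸ mul_le_mul_left ih W).trans hW

theorem mul_mem_pow_of_mem_pow {m n : ℕ} {x y : A} (hx : x ∈ W ^ m) (hy : y ∈ W ^ n) :
    x * y ∈ W ^ (m + n) :=
  pow_add W m n ▸ mul_mem_mul hx hy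

theorem exists_ne_zero_forall_mul_eq_zero (hWW : W * W ≤ W) (hW : IsNilpotent W) (hne : W ≠ ⊥) :
    ∃ t ∈ W, t ≠ 0 ∧ ∀ x ∈ W, t * x = 0 ∧ x * t = 0 := by
  have hclass : nilpotencyClass W ≠ 0 := by
    intro h
    have h1 := pow_nilpotencyClass hW
    rw [h, pow_zero] at h1
    exact hne (by rw [← mul_one W, h1, mul_zero]; rfl)
  obtain ⟨k, hk⟩ := Nat.exists_eq_add_one_of_ne_zero hclass
  obtain ⟨hk1, hk0⟩ := nilpotencyClass_eq_succ_iff.1 hk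
  obtain ⟨j, rfl⟩ : ∃ j, k = j + 1 :=
    Nat.exists_eq_add_one_of_ne_zero (by rintro rfl; exact hne (by rw [← pow_one W, hk1]; rfl))
  obtain ⟨t, ht, ht0⟩ := exists_mem_ne_zero_of_ne_bot hk0
  refine ⟨t, pow_succ_le_self hWW j ht, ht0, fun x hx => ⟨?_, ?_⟩⟩
  · have := mul_mem_pow_of_mem_pow ht (pow_one W ▸ hx)
    rwa [hk1, zero_eq_bot, mem_bot] at this
  · have := mul_mem_pow_of_mem_pow (pow_one W ▸ hx) ht
    rwa [add_comm, hk1, zero_eq_bot, mem_bot] at this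

theorem exists_mem_notMem_mul_self_mem {N : Submodule K A} (hWW : W * W ≤ W)
    (hW : IsNilpotent W) (hWN : ¬W ≤ N) : ∃ s ∈ W, s ∉ N ∧ s * s ∈ N := by
  classical
  have hex : ∃ m, W ^ (m + 1) ≤ N := by
    obtain ⟨n, hn⟩ := hW
    exact ⟨n, by rw [Submodule.pow_succ, hn, zero_eq_bot, bot_mul]; exact bot_le⟩
  obtain ⟨m, hm⟩ : ∃ m, Nat.find hex = m + 1 :=
    Nat.exists_eq_add_one_of_ne_zero fun h => hWN (by simpa [h] using Nat.find_spec hex)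
  obtain ⟨s, hs, hsN⟩ :=
    SetLike.not_le_iff_exists.1 (Nat.find_min hex (by omega : m < Nat.find hex))
  have hsq : W ^ (m + 1) * W ^ (m + 1) ≤ W ^ (m + 1 + 1) :=
    (mul_le_mul_right (pow_succ_le_self hWW m) _).trans_eq (pow_succ W (m + 1)).symm
  have hN : W ^ (m + 1 + 1) ≤ N := hm ▸ Nat.find_spec hex
  exact ⟨s, pow_succ_le_self hWW m hs, hsN, hN (hsq (mul_mem_mul hs hs))⟩

end Powers

structure IsNilpotentPair (K : Type*) {A : Type*} [Field K] [Ring A] [Algebra K A] (s t : A) :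
    Prop where
  ne_zero : t ≠ 0
  notMem_span : s ∉ K ∙ t
  s_mul_t : s * t = 0
  t_mul_s : t * s = 0
  t_mul_t : t * t = 0
  s_mul_s_mem : s * s ∈ K ∙ t

theorem exists_isNilpotentPair {K A : Type*} [Field K] [Ring A] [Algebra K A]
    {W : Submodule K A} (hWW : W * W ≤ W) (hW : IsNilpotent W) (hrank : 1 < finrank K W) :
    ∃ s t : A, IsNilpotentPair K s t := by
  have hne : W ≠ ⊥ := by rintro rfl; simp at hrank
  obtain ⟨t, htW, ht0, hann⟩ := exists_ne_zero_forall_mul_eq_zero hWW hW hne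
  have hWt : ¬W ≤ K ∙ t := fun hle =>
    (finrank_mono hle).trans_eq (finrank_span_singleton ht0) |>.not_gt hrank
  obtain ⟨s, hsW, hst, hss⟩ := exists_mem_notMem_mul_self_mem hWW hW hWt
  exact ⟨s, t, ht0, hst, (hann s hsW).2, (hann s hsW).1, (hann t htW).1, hss⟩

namespace IsNilpotentPair

variable {K A : Type*} [Field K] [Ring A] [Algebra K A] {s t : A} {c : K}

theorem smul (h : IsNilpotentPair K s t) {a b : K} (ha : a ≠ 0) (hb : b ≠ 0) :
    IsNilpotentPair K (a • s) (b • t) := by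
  have hspan : K ∙ (b • t) = K ∙ t := span_singleton_smul_eq (IsUnit.mk0 b hb) t
  refine ⟨smul_ne_zero hb h.ne_zero, ?_, ?_, ?_, ?_, ?_⟩
  · rw [hspan, smul_mem_iff _ ha]; exact h.notMem_span
  · rw [smul_mul_smul_comm, h.s_mul_t, smul_zero]
  · rw [smul_mul_smul_comm, h.t_mul_s, smul_zero]
  · rw [smul_mul_smul_comm, h.t_mul_t, smul_zero]
  · rw [hspan, smul_mul_smul_comm]; exact smul_mem _ _ h.s_mul_s_mem

theorem eq_zero_of_smul_add_smul_eq_zero (h : IsNilpotentPair K s t) {a b : K}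
    (hab : a • s + b • t = 0) : a = 0 ∧ b = 0 := by
  have ha : a = 0 := by
    by_contra ha
    refine h.notMem_span (mem_span_singleton.2 ⟨-(a⁻¹ * b), ?_⟩)
    rw [neg_smul, neg_eq_iff_add_eq_zero, ← smul_smul, ← inv_smul_smul₀ ha s, ← smul_add,
      add_comm, hab, smul_zero]
  subst ha
  simpa [h.ne_zero] using hab

theorem isNilpotent_fst (h : IsNilpotentPair K s t) : IsNilpotent s := by
  obtain ⟨c, hc⟩ := mem_span_singleton.1 h.s_mul_s_mem
  exact ⟨3, by rw [pow_succ, sq, ← hc, smul_mul_assoc, h.t_mul_s, smul_zero]⟩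

theorem isNilpotent_snd (h : IsNilpotentPair K s t) : IsNilpotent t :=
  ⟨2, by rw [sq, h.t_mul_t]⟩

theorem one_add_mul_one_add (h : IsNilpotentPair K s t) (hc : s * s = c • t) (a b μ ν : K) :
    (1 + a • s + μ • t) * (1 + b • s + ν • t) = 1 + (a + b) • s + (μ + ν + a * b * c) • t := by
  simp only [add_mul, mul_add, one_mul, mul_one, smul_mul_smul_comm, h.s_mul_t, h.t_mul_s,
    h.t_mul_t, hc, smul_zero, add_zero, smul_smul]
  module

theorem val_zpow [CharZero K] (h : IsNilpotentPair K s t) (hc : s * s = c • t) {a μ : K}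
    {U : Aˣ} (hU : (U : A) = 1 + a • s + μ • t) (n : ℤ) :
    ((U ^ n : Aˣ) : A) = 1 + (n * a) • s + (n * μ + n * (n - 1) / 2 * a ^ 2 * c) • t := by
  have hinv : ((U⁻¹ : Aˣ) : A) = 1 + (-a) • s + (-μ + a ^ 2 * c) • t := by
    refine Units.inv_eq_of_mul_eq_one_right ?_
    rw [hU, h.one_add_mul_one_add hc]
    module
  induction n using Int.induction_on with
  | zero => simp
  | succ n ih =>
    rw [zpow_add_one, Units.val_mul, ih, hU, h.one_add_mul_one_add hc]
    push_cast
    module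
  | pred n ih =>
    rw [zpow_sub_one, Units.val_mul, ih, hinv, h.one_add_mul_one_add hc]
    push_cast
    module

theorem zpow_mul_zpow_eq_one [CharZero K] (h : IsNilpotentPair K s t) {U V : Aˣ}
    (hU : (U : A) = 1 + s) (hV : (V : A) = 1 + t) {m n : ℤ} (hmn : U ^ m * V ^ n = 1) :
    m = 0 ∧ n = 0 := by
  obtain ⟨c, hc⟩ := mem_span_singleton.1 h.s_mul_s_mem
  have hU' : (U : A) = 1 + (1 : K) • s + (0 : K) • t := by rw [hU]; module
  have hV' : (V : A) = 1 + (0 : K) • s + (1 : K) • t := by rw [hV]; module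
  have hval := congrArg Units.val hmn
  rw [Units.val_mul, h.val_zpow hc.symm hU', h.val_zpow hc.symm hV',
    h.one_add_mul_one_add hc.symm, Units.val_one, add_assoc, add_eq_left] at hval
  obtain ⟨hm, hn⟩ := h.eq_zero_of_smul_add_smul_eq_zero hval
  have hm0 : m = 0 := by simpa using hm
  subst hm0
  simpa using hn

end IsNilpotentPair

section Order

theorem exists_int_smul_mem_of_span_eq_top {V : Type*} [AddCommGroup V] [Module ℚ V]
    (L : AddSubgroup V) (hL : span ℚ (L : Set V) = ⊤) (x : V) :
    ∃ n : ℤ, n ≠ 0 ∧ n • x ∈ L := by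
  have hx : x ∈ span ℚ (L : Set V) := hL ▸ mem_top
  induction hx using span_induction with
  | mem y hy => exact ⟨1, one_ne_zero, by simpa using hy⟩
  | zero => exact ⟨1, one_ne_zero, by simp⟩
  | add y z _ _ hy hz =>
    obtain ⟨m, hm, hmy⟩ := hy
    obtain ⟨n, hn, hnz⟩ := hz
    refine ⟨m * n, mul_ne_zero hm hn, ?_⟩
    rw [smul_add, mul_comm, mul_smul, mul_comm, mul_smul]
    exact L.add_mem (L.zsmul_mem hmy n) (L.zsmul_mem hnz m)
  | smul q y _ hy =>
    obtain ⟨n, hn, hny⟩ := hy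
    refine ⟨q.den * n, mul_ne_zero (by exact_mod_cast q.den_nz) hn, ?_⟩
    have : ((q.den * n : ℤ) • q • y) = q.num • n • y := by
      rw [← Int.cast_smul_eq_zsmul ℚ, ← Int.cast_smul_eq_zsmul ℚ, ← Int.cast_smul_eq_zsmul ℚ,
        smul_smul, smul_smul]
      push_cast
      rw [mul_comm (q.den : ℚ), mul_assoc, Rat.den_mul_eq_num, mul_comm]
    rw [this]
    exact L.zsmul_mem hny _

theorem exists_int_smul_mem_of_finite {V : Type*} [AddCommGroup V] [Module ℚ V]
    (L : AddSubgroup V) (hL : span ℚ (L : Set V) = ⊤) {S : Set V} (hS : S.Finite) :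
    ∃ n : ℤ, n ≠ 0 ∧ ∀ x ∈ S, n • x ∈ L := by
  induction S, hS using Set.Finite.induction_on with
  | empty => exact ⟨1, one_ne_zero, by simp⟩
  | @insert a S _ _ ih =>
    obtain ⟨m, hm, hma⟩ := exists_int_smul_mem_of_span_eq_top L hL a
    obtain ⟨n, hn, hnS⟩ := ih
    refine ⟨m * n, mul_ne_zero hm hn, ?_⟩
    rintro x (rfl | hx)
    · rw [mul_comm, mul_smul]; exact L.zsmul_mem hma n
    · rw [mul_smul]; exact L.zsmul_mem (hnS x hx) m

variable {A : Type*} [Ring A]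

def leftOrder (L : Submodule ℤ A) : Subring A where
  carrier := {x | ∀ y ∈ L, x * y ∈ L}
  mul_mem' {a b} ha hb y hy := (mul_assoc a b y).symm ▸ ha _ (hb y hy)
  one_mem' y hy := (one_mul y).symm ▸ hy
  add_mem' {a b} ha hb y hy := (add_mul a b y).symm ▸ L.add_mem (ha y hy) (hb y hy)
  zero_mem' y _ := (zero_mul y).symm ▸ L.zero_mem
  neg_mem' {a} ha y hy := (neg_mul a y).symm ▸ L.neg_mem (ha y hy)

theorem mem_leftOrder {L : Submodule ℤ A} {x : A} : x ∈ leftOrder L ↔ ∀ y ∈ L, x * y ∈ L :=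
  Iff.rfl

theorem leftOrder_le {L : Submodule ℤ A} (hL : (1 : A) ∈ L) :
    (leftOrder L).toAddSubgroup.toIntSubmodule ≤ L :=
  fun x hx => mul_one x ▸ mem_leftOrder.1 hx 1 hL

variable [Algebra ℚ A]

theorem isZOrder_leftOrder {S : Set A} (hS : S.Finite) (h1 : (1 : A) ∈ S)
    (hspan : span ℚ S = ⊤) : IsZOrder A (leftOrder (span ℤ S)) := by
  have hLspan : span ℚ ((span ℤ S : Submodule ℤ A) : Set A) = ⊤ := by
    rw [span_span_of_tower, hspan]
  refine ⟨?_, eq_top_iff.2 fun x _ => ?_⟩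
  · have : IsNoetherian ℤ (span ℤ S) := isNoetherian_of_fg_of_noetherian _ (fg_span hS)
    exact (fg_iff_addSubgroup_fg _).1 <|
      isNoetherian_submodule.1 this _ (leftOrder_le (subset_span h1))
  · obtain ⟨n, hn, hnS⟩ := exists_int_smul_mem_of_finite (span ℤ S).toAddSubgroup hLspan
      (hS.image (x * ·))
    have hnx : n • x ∈ leftOrder (span ℤ S) := by
      refine fun y hy => (span_le.2 fun z hz => ?_ : span ℤ S ≤
        (span ℤ S).comap (LinearMap.mulLeft ℤ (n • x))) hy
      simpa [smul_mul_assoc] using hnS (x * z) ⟨z, hz, rfl⟩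
    have hx : x = (n : ℚ)⁻¹ • (n : ℚ) • x := (inv_smul_smul₀ (Int.cast_ne_zero.2 hn) x).symm
    rw [hx, Int.cast_smul_eq_zsmul]
    exact smul_mem _ _ (subset_span hnx)

theorem exists_isZOrder [FiniteDimensional ℚ A] : ∃ Γ, IsZOrder A Γ := by
  let b := Module.finBasis ℚ A
  refine ⟨_, isZOrder_leftOrder ((Set.finite_range b).insert 1) (Set.mem_insert 1 _) ?_⟩
  exact eq_top_iff.2 (b.span_eq ▸ span_mono (Set.subset_insert _ _))

end Order

namespace IsNilpotentPair

variable {A : Type*} [Ring A] [Algebra ℚ A] {s t : A}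

theorem hasZxZ_units_of_mem (h : IsNilpotentPair ℚ s t) {Γ : Subring A} (hs : s ∈ Γ)
    (ht : t ∈ Γ) : HasZxZ Γˣ := by
  have nil {x : A} (hx : x ∈ Γ) (hnil : IsNilpotent x) : IsNilpotent (⟨x, hx⟩ : Γ) :=
    (IsNilpotent.map_iff Subtype.val_injective (F := Γ →+* A) (f := Γ.subtype)).1 hnil
  set u := (nil hs h.isNilpotent_fst).isUnit_one_add.unit
  set v := (nil ht h.isNilpotent_snd).isUnit_one_add.unit
  have hst : Commute s t := h.s_mul_t.trans h.t_mul_s.symm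
  have hcomm : Commute u v := Commute.units_val_iff.1 <| Subtype.ext <|
    ((Commute.one_left (1 + t)).add_left ((Commute.one_right s).add_right hst)).eq
  refine ⟨((zpowersHom _ u).noncommCoprod (zpowersHom _ v) fun m n =>
      hcomm.zpow_zpow m.toAdd n.toAdd).comp (MulEquiv.prodMultiplicative ℤ ℤ).toMonoidHom,
    (injective_iff_map_eq_one _).2 fun p hp => ?_⟩
  have huv : u ^ p.toAdd.1 * v ^ p.toAdd.2 = 1 := hp
  obtain ⟨h1, h2⟩ := h.zpow_mul_zpow_eq_one (U := Units.map Γ.subtype.toMonoidHom u)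
    (V := Units.map Γ.subtype.toMonoidHom v) rfl rfl
    (by rw [← map_zpow, ← map_zpow, ← map_mul, huv, map_one])
  exact Multiplicative.toAdd.injective (Prod.ext h1 h2)

theorem hasZxZ_units (h : IsNilpotentPair ℚ s t) {Γ : Subring A} (hΓ : IsZOrder A Γ) :
    HasZxZ Γˣ := by
  obtain ⟨m, hm, hms⟩ := exists_int_smul_mem_of_span_eq_top Γ.toAddSubgroup hΓ.2 s
  obtain ⟨n, hn, hnt⟩ := exists_int_smul_mem_of_span_eq_top Γ.toAddSubgroup hΓ.2 t
  refine (h.smul (Int.cast_ne_zero.2 hm) (Int.cast_ne_zero.2 hn)).hasZxZ_units_of_mem ?_ ?_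
  · rwa [Int.cast_smul_eq_zsmul]
  · rwa [Int.cast_smul_eq_zsmul]

end IsNilpotentPair

theorem jacobson_radical_dim_le_one_of_hyperbolic
    (A : Type*) [Ring A] [Algebra ℚ A] [FiniteDimensional ℚ A]
    (hA : HasHyperbolicProperty A) :
    Module.finrank ℚ (Submodule.restrictScalars ℚ ((⊥ : Ideal A).jacobson)) ≤ 1 := by
  by_contra! hrank
  obtain ⟨s, t, h⟩ := exists_isNilpotentPair restrictScalars_jacobson_bot_mul_le
    isNilpotent_restrictScalars_jacobson_bot hrank
  obtain ⟨Γ, hΓ⟩ := exists_isZOrder (A := A)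
  exact hA Γ hΓ (h.hasZxZ_units hΓ)
end

section
/- Let A₁ and A₂ be finite-dimensional ℚ-algebras, each possessing a ℤ-order whose unit group is infinite. Then the direct product A₁ × A₂ does not have the hyperbolic property; explicitly, A₁ × A₂ has a ℤ-order whose unit group contains a subgroup isomorphic to ℤ × ℤ. -/
/-!
An infinite unit group of a `ℤ`-order `Γ` contains a unit of infinite order. Indeed `Γ / 3Γ` is
finite, so two distinct units are congruent modulo `3` and their quotient `u ≠ 1` satisfies
`u ≡ 1 (mod 3)`. The units `≡ 1 (mod 3)` form a torsion-free group: if `u ^ p = 1` for a prime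
`p ≠ 3`, then `(u - 1) (1 + u + ⋯ + u ^ (p - 1)) = 0` with the second factor `≡ p`, a unit
modulo `3`; for `p = 3` one expands `(1 + 3c) ^ 3 = 1`. In both cases `x (1 + 3w) = 0` forces `x`
into `⋂ₖ 3ᵏ Γ`, which is `0` by Krull's intersection theorem. (Modulo `2` this fails: `-1 ≡ 1`.)
Units of infinite order `u₁ ∈ Γ₁ˣ`, `u₂ ∈ Γ₂ˣ` then generate a copy of `ℤ × ℤ` in the units of
the order `Γ₁ × Γ₂`.
-/

section CongruenceSubgroup

open scoped Pointwise

variable {R : Type*} [Ring R]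

theorem dvd_pow_sub_one {a u : R} (h : a ∣ u - 1) (m : ℕ) : a ∣ u ^ m - 1 :=
  h.trans (sub_one_dvd_pow_sub_one u m)

variable [Module.Finite ℤ R]

theorem exists_ne_one_dvd_sub_one [Infinite Rˣ] {n : ℕ} (hn : n ≠ 0) :
    ∃ u : Rˣ, u ≠ 1 ∧ (n : R) ∣ u - 1 := by
  let N : Submodule ℤ R := (n : ℤ) • ⊤
  have : Finite (R ⧸ N) := by
    refine Module.finite_of_fg_torsion _ fun x => ⟨⟨n, ?_⟩, ?_⟩
    · exact mem_nonZeroDivisors_of_ne_zero (by exact_mod_cast hn)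
    · induction x using Submodule.Quotient.induction_on with
      | H x =>
        rw [← Submodule.Quotient.mk_smul, Submodule.Quotient.mk_eq_zero]
        exact Submodule.smul_mem_pointwise_smul x _ ⊤ trivial
  obtain ⟨u, v, huv, he⟩ :=
    Finite.exists_ne_map_eq_of_infinite fun u : Rˣ => Submodule.Quotient.mk (p := N) (u : R)
  obtain ⟨y, -, hy⟩ := (Submodule.mem_smul_pointwise_iff_exists _ _ _).mp
    ((Submodule.Quotient.eq N).mp he)
  refine ⟨u * v⁻¹, mul_inv_eq_one.not.mpr huv, y * ↑v⁻¹, ?_⟩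
  rw [Units.val_mul, ← mul_assoc, ← Int.cast_natCast, ← zsmul_eq_mul, hy, sub_mul,
    Units.mul_inv]

variable [IsAddTorsionFree R]

theorem eq_zero_of_forall_pow_dvd {n : ℕ} (hn : n ≠ 1) {x : R} (h : ∀ k, (n : R) ^ k ∣ x) :
    x = 0 := by
  have hI : Ideal.span {(n : ℤ)} ≠ ⊤ := by
    rwa [Ne, Ideal.span_singleton_eq_top, Int.isUnit_iff_natAbs_eq, Int.natAbs_natCast]
  rw [← Submodule.mem_bot ℤ, ← Ideal.iInf_pow_smul_eq_bot_of_isTorsionFree _ hI, Submodule.mem_iInf]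
  intro k
  obtain ⟨y, rfl⟩ := h k
  rw [Ideal.span_singleton_pow, Submodule.ideal_span_singleton_smul]
  exact (Submodule.mem_smul_pointwise_iff_exists _ _ _).mpr ⟨y, trivial, by simp [zsmul_eq_mul]⟩

theorem eq_zero_of_mul_one_add_mul_eq_zero {n : ℕ} (hn : n ≠ 1) {x w : R}
    (h : x * (1 + n * w) = 0) : x = 0 := by
  have hx : x = -(x * (n * w)) := by
    rw [mul_add, mul_one] at h
    exact eq_neg_of_add_eq_zero_left h
  refine eq_zero_of_forall_pow_dvd hn fun k => ?_
  induction k with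
  | zero => simp
  | succ k ih =>
    obtain ⟨y, hy⟩ := ih
    refine ⟨-(y * w), ?_⟩
    rw [hx, hy, pow_succ, mul_assoc, ← mul_assoc y, ← (Nat.cast_commute n y).eq]
    noncomm_ring

theorem eq_one_of_pow_eq_one_of_coprime {n m : ℕ} (hn : n ≠ 1) (hmn : m.Coprime n) {u : R}
    (hu : (n : R) ∣ u - 1) (hum : u ^ m = 1) : u = 1 := by
  obtain ⟨s, t, hst⟩ := Nat.Coprime.isCoprime hmn
  set G := ∑ i ∈ Finset.range m, u ^ i
  obtain ⟨c, hc⟩ : (n : R) ∣ G - m := by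
    have : G - m = ∑ i ∈ Finset.range m, (u ^ i - 1) := by simp [G, Finset.sum_sub_distrib]
    exact this ▸ Finset.dvd_sum fun i _ => dvd_pow_sub_one hu i
  have hsm : (s : R) * m = 1 - t * n := by
    rw [eq_sub_iff_add_eq]
    exact_mod_cast congrArg (Int.cast (R := R)) hst
  have hsG : (s : R) * G = 1 + n * (s * c - t) := by
    rw [← sub_add_cancel G m, hc, mul_add, hsm, ← mul_assoc, (Int.cast_commute s (n : R)).eq,
      (Int.cast_commute t (n : R)).eq, mul_assoc, mul_sub]
    abel
  rw [← sub_eq_zero]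
  refine eq_zero_of_mul_one_add_mul_eq_zero hn (w := s * c - t) ?_
  rw [← hsG, ← (Int.cast_commute s (u - 1)).left_comm, mul_geom_sum, hum, sub_self, mul_zero]

theorem eq_one_of_pow_three_eq_one {u : R} (hu : (3 : R) ∣ u - 1) (hu3 : u ^ 3 = 1) : u = 1 := by
  obtain ⟨c, hc⟩ := hu
  rw [sub_eq_iff_eq_add'] at hc
  subst hc
  have h9 : (9 : ℕ) • (c * (1 + (3 : ℕ) * (c + c ^ 2))) = 0 := by
    rw [← sub_eq_zero.mpr hu3]
    push_cast
    noncomm_ring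
  have hc : c = 0 := eq_zero_of_mul_one_add_mul_eq_zero (by norm_num)
    ((smul_eq_zero.mp h9).resolve_left (by norm_num))
  simp [hc]

theorem eq_one_of_isOfFinOrder {u : R} (hu : IsOfFinOrder u) (h3 : (3 : R) ∣ u - 1) : u = 1 := by
  obtain ⟨n, hn, hun⟩ := hu.exists_pow_eq_one
  clear hu
  induction n using Nat.recOnMul generalizing u with
  | zero => exact absurd hn (lt_irrefl 0)
  | one => simpa using hun
  | prime p hp =>
    rcases eq_or_ne p 3 with rfl | hp3
    · exact eq_one_of_pow_three_eq_one h3 hun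
    · refine eq_one_of_pow_eq_one_of_coprime (n := 3) (by norm_num) ?_ (by exact_mod_cast h3) hun
      exact (Nat.coprime_primes hp Nat.prime_three).mpr hp3
  | mul a b iha ihb =>
    rw [pow_mul] at hun
    have hua : u ^ a = 1 := ihb (dvd_pow_sub_one h3 a) (Nat.pos_of_mul_pos_left hn) hun
    exact iha h3 (Nat.pos_of_mul_pos_right hn) hua

theorem exists_units_not_isOfFinOrder [Infinite Rˣ] : ∃ u : Rˣ, ¬IsOfFinOrder u := by
  obtain ⟨u, hu1, hu3⟩ := exists_ne_one_dvd_sub_one (R := R) (n := 3) (by norm_num)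
  refine ⟨u, fun hu => hu1 (Units.val_eq_one.mp ?_)⟩
  exact eq_one_of_isOfFinOrder (Units.isOfFinOrder_val.mpr hu) (by exact_mod_cast hu3)

end CongruenceSubgroup

theorem Subring.exists_units_not_isOfFinOrder {A : Type*} [Ring A] [IsAddTorsionFree A]
    {Γ : Subring A} (hΓ : Γ.toAddSubgroup.FG) [Infinite Γˣ] : ∃ u : Γˣ, ¬IsOfFinOrder u := by
  have : Module.Finite ℤ Γ :=
    Module.Finite.iff_addGroup_fg.mpr ((AddGroup.fg_iff_addSubgroup_fg _).mpr hΓ)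
  have : IsAddTorsionFree Γ :=
    Function.Injective.isAddTorsionFree Γ.subtype.toAddMonoidHom Subtype.val_injective
  exact _root_.exists_units_not_isOfFinOrder

theorem HasZxZ.of_mulEquiv {G H : Type*} [Group G] [Group H] (hG : HasZxZ G) (e : G ≃* H) :
    HasZxZ H :=
  let ⟨f, hf⟩ := hG
  ⟨e.toMonoidHom.comp f, e.injective.comp hf⟩

theorem hasZxZ_prod {G H : Type*} [Group G] [Group H] {g : G} {h : H} (hg : ¬IsOfFinOrder g)
    (hh : ¬IsOfFinOrder h) : HasZxZ (G × H) := by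
  refine ⟨((zpowersHom G g).prodMap (zpowersHom H h)).comp
    (MulEquiv.prodMultiplicative ℤ ℤ).toMonoidHom, ?_⟩
  refine Function.Injective.comp ?_ (MulEquiv.prodMultiplicative ℤ ℤ).injective
  exact Function.Injective.prodMap
    ((injective_zpow_iff_not_isOfFinOrder.mpr hg).comp Multiplicative.toAdd.injective)
    ((injective_zpow_iff_not_isOfFinOrder.mpr hh).comp Multiplicative.toAdd.injective)

theorem IsZOrder.prod {A B : Type*} [Ring A] [Algebra ℚ A] [Ring B] [Algebra ℚ B]
    {Γ : Subring A} {Δ : Subring B} (hΓ : IsZOrder A Γ) (hΔ : IsZOrder B Δ) :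
    IsZOrder (A × B) (Γ.prod Δ) := by
  refine ⟨hΓ.1.prod hΔ.1, eq_top_iff.mpr ?_⟩
  rw [← Submodule.prod_top, ← hΓ.2, ← hΔ.2, ← LinearMap.span_inl_union_inr]
  refine Submodule.span_mono (Set.union_subset ?_ ?_)
  · rintro _ ⟨a, ha, rfl⟩
    exact ⟨ha, Δ.zero_mem⟩
  · rintro _ ⟨b, hb, rfl⟩
    exact ⟨Γ.zero_mem, hb⟩

theorem product_of_algebras_with_infinite_units_not_hyperbolic_general
    (A₁ A₂ : Type*) [Ring A₁] [Algebra ℚ A₁]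
    [Ring A₂] [Algebra ℚ A₂]
    (h₁ : ∃ Γ₁ : Subring A₁, IsZOrder A₁ Γ₁ ∧ Infinite Γ₁ˣ)
    (h₂ : ∃ Γ₂ : Subring A₂, IsZOrder A₂ Γ₂ ∧ Infinite Γ₂ˣ) :
    ¬ HasHyperbolicProperty (A₁ × A₂) ∧
      ∃ Γ : Subring (A₁ × A₂), IsZOrder (A₁ × A₂) Γ ∧ HasZxZ Γˣ := by
  obtain ⟨Γ₁, hΓ₁, _⟩ := h₁
  obtain ⟨Γ₂, hΓ₂, _⟩ := h₂
  have := IsAddTorsionFree.of_module_rat A₁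
  have := IsAddTorsionFree.of_module_rat A₂
  obtain ⟨u₁, hu₁⟩ := Subring.exists_units_not_isOfFinOrder hΓ₁.1
  obtain ⟨u₂, hu₂⟩ := Subring.exists_units_not_isOfFinOrder hΓ₂.1
  have hZ : HasZxZ (Γ₁.prod Γ₂)ˣ := (hasZxZ_prod hu₁ hu₂).of_mulEquiv
    ((Units.mapEquiv (Γ₁.prodEquiv Γ₂).toMulEquiv).trans MulEquiv.prodUnits).symm
  exact ⟨fun H => H _ (hΓ₁.prod hΓ₂) hZ, _, hΓ₁.prod hΓ₂, hZ⟩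

theorem product_of_algebras_with_infinite_units_not_hyperbolic
    (A₁ A₂ : Type*) [Ring A₁] [Algebra ℚ A₁] [FiniteDimensional ℚ A₁]
    [Ring A₂] [Algebra ℚ A₂] [FiniteDimensional ℚ A₂]
    (h₁ : ∃ Γ₁ : Subring A₁, IsZOrder A₁ Γ₁ ∧ Infinite Γ₁ˣ)
    (h₂ : ∃ Γ₂ : Subring A₂, IsZOrder A₂ Γ₂ ∧ Infinite Γ₂ˣ) :
    ¬ HasHyperbolicProperty (A₁ × A₂) ∧
      ∃ Γ : Subring (A₁ × A₂), IsZOrder (A₁ × A₂) Γ ∧ HasZxZ Γˣ :=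
  product_of_algebras_with_infinite_units_not_hyperbolic_general A₁ A₂ h₁ h₂
end

section
/- The algebra T₂(ℚ) of upper triangular 2×2 matrices over ℚ has the hyperbolic property: for every ℤ-order Γ in T₂(ℚ), the unit group Γˣ contains no subgroup isomorphic to ℤ × ℤ. -/
/-- The `ℚ`-algebra of upper triangular `2 × 2` matrices over `ℚ`. -/
def T2Q : Subalgebra ℚ (Matrix (Fin 2) (Fin 2) ℚ) where
  carrier := {M | M 1 0 = 0}
  mul_mem' := by
    intro a b ha hb
    simp only [Set.mem_setOf_eq] at *
    simp [Matrix.mul_apply, Fin.sum_univ_two, ha, hb]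
  add_mem' := by
    intro a b ha hb
    simp only [Set.mem_setOf_eq] at *
    simp [ha, hb]
  algebraMap_mem' := by
    intro q
    simp [Matrix.algebraMap_eq_diagonal, Matrix.diagonal]

open Function

theorem not_injective_int_prod_to_rat (φ : ℤ × ℤ →+ ℚ) : ¬ Injective φ := by
  intro hφ
  set x := φ (1, 0)
  set y := φ (0, 1)
  -- `x.den • x = x.num`, so `y.num * x.den • x = x.num * y.den • y`.
  have hrel : φ (y.num * x.den, -(x.num * y.den)) = φ 0 := by
    have hsplit : ((y.num * x.den, -(x.num * y.den)) : ℤ × ℤ)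
        = (y.num * x.den) • ((1, 0) : ℤ × ℤ) + (-(x.num * y.den)) • ((0, 1) : ℤ × ℤ) := by
      ext <;> simp
    rw [hsplit, map_add, map_zsmul, map_zsmul, map_zero, zsmul_eq_mul, zsmul_eq_mul]
    push_cast
    linear_combination (y.num : ℚ) * x.mul_den_eq_num - (x.num : ℚ) * y.mul_den_eq_num
  have hnum : x.num * y.den = 0 := by simpa using congrArg Prod.snd (hφ hrel)
  have hx : x = φ 0 := by simpa [y.den_nz] using hnum
  simpa using hφ hx

section Order

variable {A : Type*} [Ring A] {Γ : Subring A}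

theorem Subring.isIntegral_of_fg (hΓ : Γ.toAddSubgroup.FG) {x : A} (hx : x ∈ Γ) :
    IsIntegral ℤ x :=
  IsIntegral.of_mem_of_fg (subalgebraOfSubring Γ) (Submodule.fg_iff_addSubgroup_fg _ |>.mpr hΓ)
    x hx

theorem Subring.exists_int_eq_map_of_fg (hΓ : Γ.toAddSubgroup.FG) (φ : A →+* ℚ) {x : A}
    (hx : x ∈ Γ) : ∃ k : ℤ, (k : ℚ) = φ x :=
  IsIntegrallyClosed.isIntegral_iff.mp ((Subring.isIntegral_of_fg hΓ hx).map φ.toIntAlgHom)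

theorem Subring.map_unit_sq_eq_one_of_fg (hΓ : Γ.toAddSubgroup.FG) (φ : A →+* ℚ) (u : Γˣ) :
    φ ((u : Γ) : A) ^ 2 = 1 := by
  obtain ⟨k, hk⟩ := Subring.exists_int_eq_map_of_fg hΓ φ (u : Γ).2
  obtain ⟨l, hl⟩ := Subring.exists_int_eq_map_of_fg hΓ φ ((u⁻¹ : Γˣ) : Γ).2
  have hkl : k * l = 1 := by
    have : φ ((u : Γ) : A) * φ ((u⁻¹ : Γˣ) : Γ) = 1 := by
      rw [← map_mul, ← Subring.coe_mul, Units.mul_inv, Subring.coe_one, map_one]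
    exact_mod_cast hk ▸ hl ▸ this
  rcases Int.eq_one_or_neg_one_of_mul_eq_one hkl with rfl | rfl <;> simp [← hk]

end Order

namespace T2Q

local notation "M₂" => Matrix (Fin 2) (Fin 2) ℚ

def diagHom (i : Fin 2) : T2Q →+* ℚ where
  toFun x := (x : M₂) i i
  map_one' := by simp
  map_mul' x y := by
    have hx : (x : M₂) 1 0 = 0 := x.2
    have hy : (y : M₂) 1 0 = 0 := y.2
    fin_cases i <;> simp [Matrix.mul_apply, Fin.sum_univ_two, hx, hy]
  map_zero' := rfl
  map_add' _ _ := rfl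

theorem diagHom_apply (i : Fin 2) (x : T2Q) : diagHom i x = (x : M₂) i i := rfl

theorem mul_apply_zero_one (x y : T2Q) :
    ((x * y : T2Q) : M₂) 0 1 = diagHom 0 x * (y : M₂) 0 1 + (x : M₂) 0 1 * diagHom 1 y := by
  simp [diagHom_apply, Matrix.mul_apply, Fin.sum_univ_two]

theorem ext_of_diagHom {x y : T2Q} (hdiag : ∀ i, diagHom i x = diagHom i y)
    (h01 : (x : M₂) 0 1 = (y : M₂) 0 1) : x = y := by
  have h10 : (x : M₂) 1 0 = (y : M₂) 1 0 := x.2.trans y.2.symm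
  apply Subtype.ext
  ext i j
  fin_cases i <;> fin_cases j
  exacts [hdiag 0, h01, h10, hdiag 1]

variable {G : Type*} [Monoid G] (g : G →* T2Q) (hg : ∀ a i, diagHom i (g a) = 1)

def offDiagHom : Additive G →+ ℚ where
  toFun a := (g a.toMul : M₂) 0 1
  map_zero' := by simp
  map_add' a b := by
    simp only [toMul_add, map_mul, mul_apply_zero_one, hg, one_mul, mul_one, add_comm]

theorem offDiagHom_injective (hinj : Injective g) : Injective (offDiagHom g hg) :=
  fun _ _ hab => Additive.toMul.injective <| hinj <|
    ext_of_diagHom (fun i => (hg _ i).trans (hg _ i).symm) hab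

end T2Q

theorem upper_triangular_2x2_hyperbolic : HasHyperbolicProperty T2Q := by
  rintro Γ ⟨hfg, -⟩ ⟨f, hf⟩
  let g : Multiplicative (ℤ × ℤ) →* T2Q :=
    Γ.subtype.toMonoidHom.comp ((Units.coeHom Γ).comp (f.comp (powMonoidHom 2)))
  have hg_inj : Injective g :=
    Subtype.val_injective.comp <| Units.val_injective.comp <|
      hf.comp (IsMulTorsionFree.pow_left_injective two_ne_zero)
  have hg_diag : ∀ a i, T2Q.diagHom i (g a) = 1 := fun a i => by
    simpa [g] using Subring.map_unit_sq_eq_one_of_fg hfg (T2Q.diagHom i) (f a)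
  exact not_injective_int_prod_to_rat (T2Q.offDiagHom g hg_diag)
    (T2Q.offDiagHom_injective g hg_diag hg_inj)
end

section
/- Let G be a finite group, m ≥ 1, n ≥ 2, and let P be a regular n×m sandwich matrix with entries in G ∪ {θ} with P_{1,1} = 1 (the identity of G). Let S = M⁰(G; m, n; P) and for each g ∈ G set a_g = (g·P_{2,1}, 1, 1) if P_{2,1} ∈ G (and a_g = 0 in ℚ₀S if P_{2,1} = θ) and b_g = (g, 1, 2). Then in the contracted semigroup algebra ℚ₀S one has (a_g − b_g)² = 0 for every g ∈ G, and the family {a_g − b_g : g ∈ G} is linearly independent over ℚ. -/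
/-- The multiplication of the contracted semigroup algebra `ℚ₀S` of a Rees matrix
semigroup `S = M⁰(G; m, n; P)` with sandwich matrix `P : Fin n → Fin m → Option G`
(`none` playing the role of the zero symbol `θ`): the `ℚ`-vector space with basis
the nonzero elements `(g, i, j)` of `S`, with multiplication induced bilinearly from
`(g, i, j)·(h, k, l) = (g·P_{j,k}·h, i, l)` if `P_{j,k} ∈ G` and `0` if `P_{j,k} = θ`. -/
noncomputable def reesMul {G : Type*} [Group G] {m n : ℕ}
    (P : Fin n → Fin m → Option G)
    (x y : (G × Fin m × Fin n) →₀ ℚ) : (G × Fin m × Fin n) →₀ ℚ :=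
  x.sum fun a c => y.sum fun b d =>
    (P a.2.2 b.2.1).elim 0 fun p =>
      Finsupp.single (a.1 * p * b.1, (a.2.1, b.2.2)) (c * d)

/-- The element `a_g = (g·P_{2,1}, 1, 1)` of `ℚ₀S` (equal to `0` if `P_{2,1} = θ`). -/
noncomputable def reesA {G : Type*} [Group G] {m n : ℕ} (hm : 1 ≤ m) (hn : 2 ≤ n)
    (P : Fin n → Fin m → Option G) (g : G) : (G × Fin m × Fin n) →₀ ℚ :=
  (P ⟨1, by omega⟩ ⟨0, by omega⟩).elim 0 fun p =>
    Finsupp.single (g * p, (⟨0, by omega⟩, ⟨0, by omega⟩)) 1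

/-- The element `b_g = (g, 1, 2)` of `ℚ₀S`. -/
noncomputable def reesB {G : Type*} [Group G] {m n : ℕ} (hm : 1 ≤ m) (hn : 2 ≤ n)
    (g : G) : (G × Fin m × Fin n) →₀ ℚ :=
  Finsupp.single (g, (⟨0, by omega⟩, ⟨1, by omega⟩)) 1

/-!
Multiplication in `ℚ₀S` is bilinear. Since `P₁₁ = 1`, the elements `a_g = (g P₂₁, 1, 1)` and
`b_g = (g, 1, 2)` multiply every element `(h, 1, l)` of the first row of `S` from the left to
the same product `(g P₂₁ h, 1, l)` (both vanish when `P₂₁ = θ`). As `a_g - b_g` itself lies in the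
span of the first row, it squares to zero. Linear independence is read off the coordinates in
the column `2`, where `a_g` vanishes and `b_g` is the basis vector at `(g, 1, 2)`.
-/

namespace ReesMatrix

variable {G : Type*} [Group G] {m n : ℕ} (P : Fin n → Fin m → Option G)

lemma reesMul_add_left (x x' y : (G × Fin m × Fin n) →₀ ℚ) :
    reesMul P (x + x') y = reesMul P x y + reesMul P x' y := by
  unfold reesMul
  refine Finsupp.sum_add_index' (fun a => Finset.sum_eq_zero fun b _ => by
    dsimp only; cases P a.2.2 b.2.1 <;> simp) fun a c c' => ?_
  rw [← Finsupp.sum_add]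
  refine Finsupp.sum_congr fun b _ => ?_
  cases P a.2.2 b.2.1 <;> simp [add_mul, Finsupp.single_add]

lemma reesMul_smul_left (r : ℚ) (x y : (G × Fin m × Fin n) →₀ ℚ) :
    reesMul P (r • x) y = r • reesMul P x y := by
  unfold reesMul
  rw [Finsupp.sum_smul_index' (fun a => Finset.sum_eq_zero fun b _ => by
    dsimp only; cases P a.2.2 b.2.1 <;> simp), Finsupp.smul_sum]
  refine Finsupp.sum_congr fun a _ => ?_
  rw [Finsupp.smul_sum]
  refine Finsupp.sum_congr fun b _ => ?_
  cases P a.2.2 b.2.1 <;> simp only [Option.elim_none, Option.elim_some, smul_zero,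
    Finsupp.smul_single, smul_eq_mul, mul_assoc]

lemma reesMul_add_right (x y y' : (G × Fin m × Fin n) →₀ ℚ) :
    reesMul P x (y + y') = reesMul P x y + reesMul P x y' := by
  unfold reesMul
  rw [← Finsupp.sum_add]
  refine Finsupp.sum_congr fun a _ => ?_
  refine Finsupp.sum_add_index' (fun b => by cases P a.2.2 b.2.1 <;> simp) fun b d d' => ?_
  cases P a.2.2 b.2.1 <;> simp [mul_add, Finsupp.single_add]

lemma reesMul_smul_right (r : ℚ) (x y : (G × Fin m × Fin n) →₀ ℚ) :
    reesMul P x (r • y) = r • reesMul P x y := by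
  unfold reesMul
  rw [Finsupp.smul_sum]
  refine Finsupp.sum_congr fun a _ => ?_
  rw [Finsupp.sum_smul_index' (fun b => by cases P a.2.2 b.2.1 <;> simp), Finsupp.smul_sum]
  refine Finsupp.sum_congr fun b _ => ?_
  cases P a.2.2 b.2.1 <;> simp only [Option.elim_none, Option.elim_some, smul_zero,
    Finsupp.smul_single, smul_eq_mul, mul_left_comm]

noncomputable def reesMulₗ :
    ((G × Fin m × Fin n) →₀ ℚ) →ₗ[ℚ] ((G × Fin m × Fin n) →₀ ℚ) →ₗ[ℚ] (G × Fin m × Fin n) →₀ ℚ :=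
  LinearMap.mk₂ ℚ (reesMul P) (reesMul_add_left P) (reesMul_smul_left P)
    (reesMul_add_right P) (reesMul_smul_right P)

@[simp]
lemma reesMulₗ_apply (x y : (G × Fin m × Fin n) →₀ ℚ) : reesMulₗ P x y = reesMul P x y :=
  rfl

lemma reesMul_single_single (a b : G × Fin m × Fin n) (c d : ℚ) :
    reesMul P (Finsupp.single a c) (Finsupp.single b d) =
      (P a.2.2 b.2.1).elim 0 fun p => Finsupp.single (a.1 * p * b.1, (a.2.1, b.2.2)) (c * d) := by
  unfold reesMul
  rw [Finsupp.sum_single_index, Finsupp.sum_single_index]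
  · cases P a.2.2 b.2.1 <;> simp
  · rw [Finsupp.sum_single_index] <;> cases P a.2.2 b.2.1 <;> simp

def firstRow : Set (G × Fin m × Fin n) := {a | (a.2.1 : ℕ) = 0}

variable {P} (hm : 1 ≤ m) (hn : 2 ≤ n)

lemma reesMul_reesA_single_eq_reesB_single (hP11 : P ⟨0, by omega⟩ ⟨0, by omega⟩ = some 1)
    (g : G) {a : G × Fin m × Fin n} (ha : a ∈ firstRow) (c : ℚ) :
    reesMul P (reesA hm hn P g) (Finsupp.single a c) =
      reesMul P (reesB hm hn g) (Finsupp.single a c) := by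
  obtain ⟨h, ⟨i, hi⟩, l⟩ := a
  obtain rfl : i = 0 := ha
  cases hp : P ⟨1, by omega⟩ ⟨0, by omega⟩ with
  | none =>
    simp only [reesA, reesB, hp, Option.elim_none, reesMul_single_single]
    exact Finsupp.sum_zero_index
  | some p => simp [reesA, reesB, hp, hP11, reesMul_single_single, mul_assoc]

lemma reesMul_reesA_eq_reesB_of_mem_supported
    (hP11 : P ⟨0, by omega⟩ ⟨0, by omega⟩ = some 1) (g : G) {x : (G × Fin m × Fin n) →₀ ℚ}
    (hx : x ∈ Finsupp.supported ℚ ℚ firstRow) :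
    reesMul P (reesA hm hn P g) x = reesMul P (reesB hm hn g) x := by
  rw [Finsupp.supported_eq_span_single] at hx
  refine LinearMap.eqOn_span (f := reesMulₗ P (reesA hm hn P g)) (g := reesMulₗ P (reesB hm hn g))
    ?_ hx
  rintro _ ⟨a, ha, rfl⟩
  exact reesMul_reesA_single_eq_reesB_single hm hn hP11 g ha 1

lemma reesA_sub_reesB_mem_supported (g : G) :
    reesA hm hn P g - reesB hm hn g ∈ Finsupp.supported ℚ ℚ firstRow := by
  refine Submodule.sub_mem _ ?_ (Finsupp.single_mem_supported ℚ _ rfl)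
  unfold reesA
  cases P ⟨1, by omega⟩ ⟨0, by omega⟩ with
  | none => exact Submodule.zero_mem _
  | some p => exact Finsupp.single_mem_supported ℚ _ rfl

lemma reesMul_reesA_sub_reesB_self (hP11 : P ⟨0, by omega⟩ ⟨0, by omega⟩ = some 1) (g : G) :
    reesMul P (reesA hm hn P g - reesB hm hn g) (reesA hm hn P g - reesB hm hn g) = 0 := by
  rw [← reesMulₗ_apply, LinearMap.map_sub₂, sub_eq_zero]
  exact reesMul_reesA_eq_reesB_of_mem_supported hm hn hP11 g
    (reesA_sub_reesB_mem_supported hm hn g)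

lemma reesA_apply_of_col_ne_zero (g : G) {a : G × Fin m × Fin n} (ha : (a.2.2 : ℕ) ≠ 0) :
    reesA hm hn P g a = 0 := by
  unfold reesA
  cases P ⟨1, by omega⟩ ⟨0, by omega⟩ with
  | none => rfl
  | some p => exact Finsupp.single_eq_of_ne fun h => ha (by rw [h])

lemma linearIndependent_reesA_sub_reesB :
    LinearIndependent ℚ fun g : G => reesA hm hn P g - reesB hm hn g := by
  let ι : G → G × Fin m × Fin n := fun g => (g, ⟨0, by omega⟩, ⟨1, by omega⟩)
  have hι : Function.Injective ι := fun g h hgh => congrArg Prod.fst hgh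
  let restrict := Finsupp.lcomapDomain (R := ℚ) (M := ℚ) ι hι
  refine LinearIndependent.of_comp restrict ?_
  have hcomp : restrict ∘ (fun g : G => reesA hm hn P g - reesB hm hn g) =
      fun g => Finsupp.single g (-1) := by
    funext g
    ext h
    show reesA hm hn P g (ι h) - Finsupp.single (ι g) 1 (ι h) = Finsupp.single g (-1) h
    rw [reesA_apply_of_col_ne_zero hm hn g one_ne_zero, Finsupp.single_apply_left hι, zero_sub,
      Finsupp.single_neg, Finsupp.neg_apply]
  rw [hcomp]
  exact Finsupp.linearIndependent_single_of_ne_zero fun _ => by norm_num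

end ReesMatrix

open ReesMatrix

theorem rees_nilpotents_linearly_independent
    (G : Type*) [Group G] (m n : ℕ) (hm : 1 ≤ m) (hn : 2 ≤ n)
    (P : Fin n → Fin m → Option G)
    (hP11 : P ⟨0, by omega⟩ ⟨0, by omega⟩ = some 1) :
    (∀ g : G,
      reesMul P (reesA hm hn P g - reesB hm hn g) (reesA hm hn P g - reesB hm hn g) = 0) ∧
    LinearIndependent ℚ (fun g : G => reesA hm hn P g - reesB hm hn g) :=
  ⟨reesMul_reesA_sub_reesB_self hm hn hP11, linearIndependent_reesA_sub_reesB hm hn⟩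
end
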